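/- Let P be a probability measure on infinite binary sequences, x a finite string with P(Γ_x) > 0, and M a nonnegative P-supermartingale. Let A be a set of strings extending x with P(Ã) > 0, where Ã = ∪_{y∈A} Γ_y. For any 0 < μ < 1, there exists A' ⊆ A with P(Ã') > μ·P(Ã) such that for all y ∈ A' and all j with l(x) ≤ j ≤ l(y), M(y^j) ≤ M(x) / ((1-μ)·P(Ã|x)), where P(Ã|x) = P(Ã)/P(Γ_x) and y^j is the length-j prefix of y. -/

import Mathlib

/-!
Put `c = M(x) / ((1 - t) P(Ã | x))` and keep those `y ∈ A` along which `M` stays at most `c`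
from length `l(x)` on. Every other `y` extends a first string `z ⊒ x` with `M z > c`; these
first crossings form a prefix-free set, so iterating the supermartingale inequality gives
`∑ M(z) P(Γ_z) ≤ M(x) P(Γ_x)`. As `c < M z` on each of them, the discarded cylinders have
measure `< M(x) P(Γ_x) / c = (1 - t) P(Ã)`, and the kept part has measure `> t P(Ã)`.
-/

open MeasureTheory Filter Asymptotics
open scoped ENNReal

/-- The length-`n` prefix of an infinite binary sequence, as a list. -/
def pref (ω : ℕ → Bool) (n : ℕ) : List Bool := (List.range n).map ω

/-- `a` is a (finite) prefix of the infinite sequence `ω`. -/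
def PrefixOf (a : List Bool) (ω : ℕ → Bool) : Prop := pref ω a.length = a

/-- The cylinder set of infinite sequences extending the string `x`. -/
def Cyl (x : List Bool) : Set (ℕ → Bool) := {ω | PrefixOf x ω}

/-- Plain Kolmogorov complexity of `x` with respect to a decoding function `U`. -/
noncomputable def PC (U : List Bool →. List Bool) (x : List Bool) : ℕ :=
  sInf {n | ∃ p : List Bool, p.length = n ∧ x ∈ U p}

/-- `U` is an optimal (universal) partial computable decoding function for plain complexity. -/
def PlainOptimal (U : List Bool →. List Bool) : Prop :=
  Partrec U ∧
    ∀ V : List Bool →. List Bool, Partrec V → ∃ c : ℕ, ∀ x p : List Bool,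
      x ∈ V p → PC U x ≤ p.length + c

/-- An r.e. monotone machine representation: `R p x` means that on program `p`
the machine (eventually) outputs an extension of `x`. -/
def MonotoneRepr (R : List Bool → List Bool → Prop) : Prop :=
  REPred (fun q : List Bool × List Bool => R q.1 q.2) ∧
  (∀ p x p' x', R p x → R p' x' → p <+: p' → (x <+: x' ∨ x' <+: x)) ∧
  (∀ p x x', R p x → x' <+: x → R p x')

/-- Monotone complexity with respect to a monotone machine representation `R`. -/
noncomputable def KmR (R : List Bool → List Bool → Prop) (x : List Bool) : ℕ :=
  sInf {n | ∃ p : List Bool, p.length = n ∧ R p x}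

/-- `R` is an optimal monotone machine, so `KmR R` is the monotone complexity `Km`. -/
def MonotoneOptimal (R : List Bool → List Bool → Prop) : Prop :=
  MonotoneRepr R ∧
    ∀ R', MonotoneRepr R' → ∃ c : ℕ, ∀ x p : List Bool, R' p x → KmR R x ≤ p.length + c

lemma pref_take (ω : ℕ → Bool) {k n : ℕ} (h : k ≤ n) : (pref ω n).take k = pref ω k := by
  simp only [pref, ← List.map_take, List.take_range, min_eq_left h]

lemma mem_Cyl {x : List Bool} {ω : ℕ → Bool} : ω ∈ Cyl x ↔ pref ω x.length = x := Iff.rfl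

lemma Cyl_anti {x y : List Bool} (h : x <+: y) : Cyl y ⊆ Cyl x := by
  intro ω hω
  rw [mem_Cyl] at hω ⊢
  rw [← pref_take ω h.length_le, hω, ← List.prefix_iff_eq_take.mp h]

lemma Cyl_eq_iInter (x : List Bool) : Cyl x = ⋂ i : Fin x.length, {ω | ω i = x[i]} := by
  ext ω
  simp [mem_Cyl, pref, List.ext_getElem_iff, Fin.forall_iff]

lemma measurableSet_Cyl (x : List Bool) : MeasurableSet (Cyl x) := by
  rw [Cyl_eq_iInter]
  exact .iInter fun i => measurableSet_eq_fun (measurable_pi_apply _) measurable_const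

lemma disjoint_Cyl {x y : List Bool} (hxy : ¬ x <+: y) (hyx : ¬ y <+: x) :
    Disjoint (Cyl x) (Cyl y) := by
  rw [Set.disjoint_left]
  intro ω hx hy
  rw [mem_Cyl] at hx hy
  rcases le_total x.length y.length with h | h
  · exact hxy (by rw [List.prefix_iff_eq_take, ← hy, pref_take ω h, hx])
  · exact hyx (by rw [List.prefix_iff_eq_take, ← hx, pref_take ω h, hy])

lemma IsAntichain.pairwiseDisjoint_Cyl {B : Set (List Bool)} (hB : IsAntichain (· <+: ·) B) :
    B.PairwiseDisjoint Cyl :=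
  fun _ hz _ hw hne => disjoint_Cyl (hB hz hw hne) (hB hw hz hne.symm)

lemma exists_append_singleton_prefix {x z : List Bool} (h : x <+: z) (hne : x ≠ z) :
    ∃ b, x ++ [b] <+: z := by
  obtain ⟨_ | ⟨b, w⟩, rfl⟩ := h
  · simp at hne
  · exact ⟨b, w, by simp⟩

/-- The paper's condition `M z ≥ ∑ M (z ν) P(ν | z)`, multiplied through by `P(z)`. -/
def IsSupermartingale (μ : Measure (ℕ → Bool)) (M : List Bool → ℝ≥0∞) : Prop :=
  ∀ z : List Bool,
    M (z ++ [false]) * μ (Cyl (z ++ [false])) + M (z ++ [true]) * μ (Cyl (z ++ [true]))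
      ≤ M z * μ (Cyl z)

namespace IsSupermartingale

variable {μ : Measure (ℕ → Bool)} {M : List Bool → ℝ≥0∞}

theorem sum_le_of_length_le (hM : IsSupermartingale μ M) (d : ℕ) {x : List Bool}
    {F : Finset (List Bool)} (hF : IsAntichain (· <+: ·) (F : Set (List Bool)))
    (hFx : ∀ z ∈ F, x <+: z ∧ z.length ≤ x.length + d) :
    ∑ z ∈ F, M z * μ (Cyl z) ≤ M x * μ (Cyl x) := by
  classical
  induction d generalizing x F with
  | zero =>
    refine (Finset.sum_le_sum_of_subset fun z hz => ?_).trans (Finset.sum_singleton _ _).le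
    obtain ⟨hxz, hlen⟩ := hFx z hz
    exact Finset.mem_singleton.mpr (hxz.eq_of_length_le (by omega)).symm
  | succ d ih =>
    by_cases hxF : x ∈ F
    · refine (Finset.sum_le_sum_of_subset fun z hz => ?_).trans (Finset.sum_singleton _ _).le
      by_contra hzx
      exact hF hxF hz (Ne.symm (Finset.notMem_singleton.mp hzx)) (hFx z hz).1
    have hlen (b : Bool) (z : List Bool) (hz : z ∈ F) : z.length ≤ (x ++ [b]).length + d := by
      simp only [List.length_append, List.length_singleton]
      linarith [(hFx z hz).2]
    have hF' (p : List Bool → Prop) [DecidablePred p] :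
        IsAntichain (· <+: ·) (F.filter p : Set (List Bool)) :=
      hF.subset (Finset.coe_subset.mpr (Finset.filter_subset p F))
    rw [← Finset.sum_filter_add_sum_filter_not F (x ++ [false] <+: ·)]
    refine (add_le_add (ih (hF' _) fun z hz => ?_) (ih (hF' _) fun z hz => ?_)).trans (hM x)
    · rw [Finset.mem_filter] at hz
      exact ⟨hz.2, hlen false z hz.1⟩
    · rw [Finset.mem_filter] at hz
      refine ⟨?_, hlen true z hz.1⟩
      obtain ⟨_ | _, hb⟩ :=
        exists_append_singleton_prefix (hFx z hz.1).1 (ne_of_mem_of_not_mem hz.1 hxF).symm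
      · exact absurd hb hz.2
      · exact hb

theorem tsum_le (hM : IsSupermartingale μ M) {x : List Bool} {B : Set (List Bool)}
    (hB : IsAntichain (· <+: ·) B) (hBx : ∀ z ∈ B, x <+: z) :
    ∑' z : B, M z * μ (Cyl z) ≤ M x * μ (Cyl x) := by
  refine ENNReal.summable.tsum_le_of_sum_le fun s => ?_
  let e := Function.Embedding.subtype (· ∈ B)
  have hsB : (s.map e : Set (List Bool)) ⊆ B := by simp [e]
  calc ∑ z ∈ s, M z * μ (Cyl z) = ∑ z ∈ s.map e, M z * μ (Cyl z) :=
        (Finset.sum_map s e fun z => M z * μ (Cyl z)).symm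
    _ ≤ M x * μ (Cyl x) :=
      hM.sum_le_of_length_le ((s.map e).sup List.length) (hB.subset hsB) fun z hz =>
        ⟨hBx z (hsB hz), (Finset.le_sup hz).trans (Nat.le_add_left _ _)⟩

theorem measure_biUnion_Cyl_lt [IsFiniteMeasure μ] (hM : IsSupermartingale μ M)
    {x : List Bool} {B : Set (List Bool)} (hB : IsAntichain (· <+: ·) B)
    (hBx : ∀ z ∈ B, x <+: z) {c m : ℝ≥0∞} (hcB : ∀ z ∈ B, c < M z) (hm : 0 < m)
    (hcm : M x * μ (Cyl x) ≤ c * m) :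
    μ (⋃ z ∈ B, Cyl z) < m := by
  rcases eq_or_ne (μ (⋃ z ∈ B, Cyl z)) 0 with h0 | h0
  · rwa [h0]
  have hdisj : μ (⋃ z ∈ B, Cyl z) = ∑' z : B, μ (Cyl z) :=
    measure_biUnion B.to_countable hB.pairwiseDisjoint_Cyl fun z _ => measurableSet_Cyl z
  obtain ⟨z₀, hz₀⟩ : ∃ z₀ : B, μ (Cyl z₀) ≠ 0 := by
    by_contra! h
    exact h0 (hdisj.trans (ENNReal.tsum_eq_zero.mpr h))
  have hc : c ≠ ⊤ := ne_top_of_lt (hcB z₀ z₀.2)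
  refine lt_of_mul_lt_mul_left' (a := c) ?_
  calc c * μ (⋃ z ∈ B, Cyl z) = ∑' z : B, c * μ (Cyl z) := by
        rw [hdisj, ENNReal.tsum_mul_left]
    _ < ∑' z : B, M z * μ (Cyl z) := by
        refine ENNReal.tsum_lt_tsum (i := z₀) ?_ (fun z => ?_) ?_
        · rw [ENNReal.tsum_mul_left, ← hdisj]
          exact ENNReal.mul_ne_top hc (measure_ne_top μ _)
        · exact mul_le_mul_left (hcB z z.2).le _
        · exact ENNReal.mul_lt_mul_left hz₀ (measure_ne_top μ _) (hcB z₀ z₀.2)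
    _ ≤ M x * μ (Cyl x) := hM.tsum_le hB hBx
    _ ≤ c * m := hcm

end IsSupermartingale

def firstCrossings (M : List Bool → ℝ≥0∞) (x : List Bool) (c : ℝ≥0∞) : Set (List Bool) :=
  {z | x <+: z ∧ c < M z ∧ ∀ j, x.length ≤ j → j < z.length → M (z.take j) ≤ c}

section firstCrossings

variable {M : List Bool → ℝ≥0∞} {x : List Bool} {c : ℝ≥0∞}

lemma isAntichain_firstCrossings : IsAntichain (· <+: ·) (firstCrossings M x c) := by
  intro z hz w hw hne hzw
  have hlt : z.length < w.length :=
    hzw.length_le.lt_of_ne fun h => hne (hzw.eq_of_length h)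
  have hle := hw.2.2 z.length hz.1.length_le hlt
  rw [← List.prefix_iff_eq_take.mp hzw] at hle
  exact hz.2.1.not_ge hle

lemma exists_mem_firstCrossings_prefix {y : List Bool} (hxy : x <+: y)
    (h : ∃ j, x.length ≤ j ∧ j ≤ y.length ∧ c < M (y.take j)) :
    ∃ z ∈ firstCrossings M x c, z <+: y := by
  classical
  obtain ⟨hxj, hjy, hcj⟩ := Nat.find_spec h
  refine ⟨y.take (Nat.find h), ⟨?_, hcj, fun i hxi hij => ?_⟩, List.take_prefix _ _⟩
  · exact List.prefix_take_iff.mpr ⟨hxy, hxj⟩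
  · rw [List.length_take] at hij
    have hi : i < Nat.find h := lt_of_lt_of_le hij (min_le_left _ _)
    rw [List.take_take, min_eq_left hi.le]
    by_contra! hci
    exact Nat.find_min h hi ⟨hxi, hi.le.trans hjy, hci⟩

lemma biUnion_Cyl_subset_union {A : Set (List Bool)} (hA : ∀ y ∈ A, x <+: y) :
    ⋃ y ∈ A, Cyl y ⊆
      (⋃ y ∈ {y ∈ A | ∀ j, x.length ≤ j → j ≤ y.length → M (y.take j) ≤ c}, Cyl y) ∪
        ⋃ z ∈ firstCrossings M x c, Cyl z := by
  intro ω hω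
  obtain ⟨y, hy, hωy⟩ := Set.mem_iUnion₂.mp hω
  by_cases hgood : ∀ j, x.length ≤ j → j ≤ y.length → M (y.take j) ≤ c
  · exact Or.inl (Set.mem_biUnion ⟨hy, hgood⟩ hωy)
  · push Not at hgood
    obtain ⟨z, hz, hzy⟩ := exists_mem_firstCrossings_prefix (hA y hy) hgood
    exact Or.inr (Set.mem_biUnion hz (Cyl_anti hzy hωy))

end firstCrossings

lemma ofReal_mul_lt_of_le_add {a b e : ℝ≥0∞} {t : ℝ} (ht0 : 0 ≤ t) (ht1 : t ≤ 1) (ha : a ≠ ⊤)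
    (h : a ≤ b + e) (he : e < ENNReal.ofReal (1 - t) * a) : ENNReal.ofReal t * a < b := by
  by_contra! hb
  have hsplit : ENNReal.ofReal t * a + ENNReal.ofReal (1 - t) * a = a := by
    rw [← add_mul, ← ENNReal.ofReal_add ht0 (sub_nonneg.mpr ht1), add_sub_cancel,
      ENNReal.ofReal_one, one_mul]
  refine lt_irrefl a ?_
  calc a ≤ b + e := h
    _ ≤ ENNReal.ofReal t * a + e := add_le_add_left hb e
    _ < ENNReal.ofReal t * a + ENNReal.ofReal (1 - t) * a :=
        ENNReal.add_lt_add_left (ENNReal.mul_ne_top ENNReal.ofReal_ne_top ha) he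
    _ = a := hsplit

theorem stmt_6_general (μ : Measure (ℕ → Bool)) [IsProbabilityMeasure μ]
    (M : List Bool → ℝ≥0∞)
    (hsuper : ∀ z : List Bool,
      M (z ++ [false]) * μ (Cyl (z ++ [false])) + M (z ++ [true]) * μ (Cyl (z ++ [true]))
        ≤ M z * μ (Cyl z))
    (x : List Bool) (hx : 0 < μ (Cyl x))
    (A : Set (List Bool)) (hA : ∀ y ∈ A, x <+: y)
    (hApos : 0 < μ (⋃ y ∈ A, Cyl y))
    (t : ℝ) (ht0 : 0 < t) (ht1 : t < 1) :
    ∃ A' ⊆ A,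
      ENNReal.ofReal t * μ (⋃ y ∈ A, Cyl y) < μ (⋃ y ∈ A', Cyl y) ∧
      ∀ y ∈ A', ∀ j : ℕ, x.length ≤ j → j ≤ y.length →
        M (y.take j) ≤
          M x / (ENNReal.ofReal (1 - t) * (μ (⋃ y ∈ A, Cyl y) / μ (Cyl x))) := by
  set At := ⋃ y ∈ A, Cyl y
  set d := ENNReal.ofReal (1 - t) * (μ At / μ (Cyl x))
  set c := M x / d
  refine ⟨{y ∈ A | ∀ j, x.length ≤ j → j ≤ y.length → M (y.take j) ≤ c}, Set.sep_subset _ _,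
    ?_, fun y hy => hy.2⟩
  have h1t : 0 < ENNReal.ofReal (1 - t) := ENNReal.ofReal_pos.mpr (sub_pos.mpr ht1)
  have hd0 : d ≠ 0 := mul_ne_zero h1t.ne' (ENNReal.div_pos hApos.ne' (measure_ne_top μ _)).ne'
  have hdtop : d ≠ ⊤ :=
    ENNReal.mul_ne_top ENNReal.ofReal_ne_top (ENNReal.div_lt_top (measure_ne_top μ _) hx.ne').ne
  have hcm : M x * μ (Cyl x) = c * (ENNReal.ofReal (1 - t) * μ At) := by
    rw [← ENNReal.div_mul_cancel hd0 hdtop (b := M x), mul_assoc, mul_assoc,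
      ENNReal.div_mul_cancel hx.ne' (measure_ne_top μ _)]
  have hbad : μ (⋃ z ∈ firstCrossings M x c, Cyl z) < ENNReal.ofReal (1 - t) * μ At :=
    IsSupermartingale.measure_biUnion_Cyl_lt hsuper isAntichain_firstCrossings
      (fun z hz => hz.1) (fun z hz => hz.2.1) (ENNReal.mul_pos h1t.ne' hApos.ne') hcm.le
  exact ofReal_mul_lt_of_le_add ht0.le ht1.le (measure_ne_top μ _)
    ((measure_mono (biUnion_Cyl_subset_union hA)).trans (measure_union_le _ _)) hbad

/-- bounded increase of supermartingale values on a large subset of extensions. -/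
theorem stmt_6 (μ : Measure (ℕ → Bool)) [IsProbabilityMeasure μ]
    (M : List Bool → ℝ≥0∞) (hroot : M [] ≤ 1)
    (hsuper : ∀ z : List Bool,
      M (z ++ [false]) * μ (Cyl (z ++ [false])) + M (z ++ [true]) * μ (Cyl (z ++ [true]))
        ≤ M z * μ (Cyl z))
    (x : List Bool) (hx : 0 < μ (Cyl x))
    (A : Set (List Bool)) (hA : ∀ y ∈ A, x <+: y)
    (hApos : 0 < μ (⋃ y ∈ A, Cyl y))
    (t : ℝ) (ht0 : 0 < t) (ht1 : t < 1) :
    ∃ A' ⊆ A,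
      ENNReal.ofReal t * μ (⋃ y ∈ A, Cyl y) < μ (⋃ y ∈ A', Cyl y) ∧
      ∀ y ∈ A', ∀ j : ℕ, x.length ≤ j → j ≤ y.length →
        M (y.take j) ≤
          M x / (ENNReal.ofReal (1 - t) * (μ (⋃ y ∈ A, Cyl y) / μ (Cyl x))) :=
  stmt_6_general μ M hsuper x hx A hA hApos t ht0 ht1
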